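/- Let c(n) = ⌊n·φ²/2⌋. For every positive integer n, {c(2n)·φ} lies in the open interval (0, (3 − √5)/2), and {c(2n+1)·φ} lies in the half-open interval (1/2, (4 − √5)/2] (with both endpoint behaviors as described: the value (4 − √5)/2 is achieved while 1/2 is not). -/

import Mathlib

/-!
Write `t = fract (n φ²)`; it lies in `(0, 1)` because `φ` is irrational. From `φ² = φ + 1` one gets
`c (2n) = ⌊n φ²⌋` and `⌊n φ²⌋ φ = (2 ⌊n φ²⌋ - n) + t (2 - φ)`, so the even fractional part is
`t (2 - φ) ∈ (0, 2 - φ)`. For the odd index `c (2n + 1) = ⌊n φ²⌋ + ⌊t + φ² / 2⌋`, and the second floor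
is `1` or `2` according as `t` lies below or above `(3 - φ) / 2`; the fractional part is then
`t (2 - φ) + φ - 1 ∈ (φ - 1, 5/2 - φ)` or `t (2 - φ) + 2φ - 3 ∈ (1/2, φ - 1)`. The value `1/2` would
need `t = (3 - φ) / 2`, which irrationality of `φ` again excludes.
-/

noncomputable def φ : ℝ := (1 + Real.sqrt 5) / 2
noncomputable def c (n : ℕ) : ℤ := ⌊(n : ℝ) * φ ^ 2 / 2⌋

lemma phi_sq : φ ^ 2 = φ + 1 := Real.goldenRatio_sq

lemma three_halves_lt_phi : 3 / 2 < φ := by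
  have : 1 < φ := Real.one_lt_goldenRatio
  nlinarith [phi_sq]

lemma phi_lt_seven_fourths : φ < 7 / 4 := by
  have : 0 < φ := Real.goldenRatio_pos
  nlinarith [phi_sq]

lemma irrational_intCast_mul_phi {m : ℤ} (hm : m ≠ 0) : Irrational (m * φ) :=
  Real.goldenRatio_irrational.intCast_mul hm

section FloorMulPhiSq

variable (n : ℤ)

lemma fract_mul_phi_sq_pos (hn : n ≠ 0) : 0 < Int.fract (n * φ ^ 2) := by
  rw [Int.fract_pos, phi_sq, mul_add, mul_one]
  exact (irrational_intCast_mul_phi hn).add_intCast n |>.ne_int _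

lemma fract_mul_phi_sq_ne : Int.fract (n * φ ^ 2) ≠ (3 - φ) / 2 := by
  intro h
  apply (irrational_intCast_mul_phi (m := 2 * n + 1) (by omega)).ne_int (3 + 2 * ⌊n * φ ^ 2⌋ - 2 * n)
  rw [Int.fract] at h
  push_cast
  linear_combination 2 * h - 2 * n * phi_sq

lemma floor_mul_phi_sq_mul_phi :
    (⌊n * φ ^ 2⌋ : ℝ) * φ = (2 * ⌊n * φ ^ 2⌋ - n : ℤ) + Int.fract (n * φ ^ 2) * (2 - φ) := by
  rw [Int.fract]
  push_cast
  linear_combination (n * (φ - 1)) * phi_sq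

lemma fract_floor_mul_phi_sq_add_mul_phi {k j : ℤ}
    (h₀ : 0 ≤ Int.fract (n * φ ^ 2) * (2 - φ) + k * φ - j)
    (h₁ : Int.fract (n * φ ^ 2) * (2 - φ) + k * φ - j < 1) :
    Int.fract (((⌊n * φ ^ 2⌋ + k : ℤ) : ℝ) * φ) = Int.fract (n * φ ^ 2) * (2 - φ) + k * φ - j := by
  refine Int.fract_eq_iff.mpr ⟨h₀, h₁, 2 * ⌊n * φ ^ 2⌋ - n + j, ?_⟩
  rw [Int.cast_add, add_mul, floor_mul_phi_sq_mul_phi]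
  push_cast
  ring

end FloorMulPhiSq

lemma c_two_mul (n : ℕ) : c (2 * n) = ⌊(n : ℝ) * φ ^ 2⌋ := by
  rw [c]
  push_cast
  ring_nf

lemma c_two_mul_add_one (n : ℕ) :
    c (2 * n + 1) = ⌊(n : ℝ) * φ ^ 2⌋ + ⌊Int.fract ((n : ℝ) * φ ^ 2) + (φ + 1) / 2⌋ := by
  rw [c, ← Int.floor_intCast_add, ← phi_sq]
  congr 1
  rw [← add_assoc, Int.floor_add_fract]
  push_cast
  ring

section FractC

variable (n : ℕ)

local notation "t" => Int.fract ((n : ℝ) * φ ^ 2)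

lemma fract_c_two_mul : Int.fract ((c (2 * n) : ℝ) * φ) = t * (2 - φ) := by
  have h := fract_floor_mul_phi_sq_add_mul_phi n (k := 0) (j := 0)
  have : 3 / 2 < φ := three_halves_lt_phi
  have : φ < 2 := Real.goldenRatio_lt_two
  push_cast at h
  rw [c_two_mul]
  simpa using h (by nlinarith [Int.fract_nonneg ((n : ℝ) * φ ^ 2)])
    (by nlinarith [Int.fract_lt_one ((n : ℝ) * φ ^ 2)])

lemma fract_c_two_mul_add_one_of_lt (ht : t < (3 - φ) / 2) :
    Int.fract ((c (2 * n + 1) : ℝ) * φ) = t * (2 - φ) + φ - 1 := by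
  have h := fract_floor_mul_phi_sq_add_mul_phi n (k := 1) (j := 1)
  have : 3 / 2 < φ := three_halves_lt_phi
  have : φ < 2 := Real.goldenRatio_lt_two
  have : 0 ≤ t := Int.fract_nonneg _
  have hfloor : ⌊t + (φ + 1) / 2⌋ = 1 := by
    rw [Int.floor_eq_iff]
    constructor <;> push_cast <;> linarith
  push_cast at h
  rw [c_two_mul_add_one, hfloor]
  simpa using h (by nlinarith) (by nlinarith)

lemma fract_c_two_mul_add_one_of_gt (ht : (3 - φ) / 2 < t) :
    Int.fract ((c (2 * n + 1) : ℝ) * φ) = t * (2 - φ) + 2 * φ - 3 := by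
  have h := fract_floor_mul_phi_sq_add_mul_phi n (k := 2) (j := 3)
  have : 3 / 2 < φ := three_halves_lt_phi
  have : φ < 2 := Real.goldenRatio_lt_two
  have : t < 1 := Int.fract_lt_one _
  have hfloor : ⌊t + (φ + 1) / 2⌋ = 2 := by
    rw [Int.floor_eq_iff]
    constructor <;> push_cast <;> linarith
  push_cast at h
  rw [c_two_mul_add_one, hfloor]
  simpa using h (by nlinarith [phi_sq]) (by nlinarith)

end FractC

theorem fract_c_phi_intervals (n : ℕ) (hn : 0 < n) :
    Int.fract ((c (2 * n) : ℝ) * φ) ∈ Set.Ioo 0 ((3 - Real.sqrt 5) / 2) ∧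
    Int.fract ((c (2 * n + 1) : ℝ) * φ) ∈ Set.Ioc (1 / 2) ((4 - Real.sqrt 5) / 2) := by
  have ht₀ : 0 < Int.fract ((n : ℝ) * φ ^ 2) := by
    exact_mod_cast fract_mul_phi_sq_pos n (by omega)
  have ht₁ : Int.fract ((n : ℝ) * φ ^ 2) < 1 := Int.fract_lt_one _
  have ht : Int.fract ((n : ℝ) * φ ^ 2) ≠ (3 - φ) / 2 := by
    exact_mod_cast fract_mul_phi_sq_ne n
  have h₃ : 3 - Real.sqrt 5 = 2 * (2 - φ) := by rw [φ]; ring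
  have h₄ : 4 - Real.sqrt 5 = 2 * (5 / 2 - φ) := by rw [φ]; ring
  have : 3 / 2 < φ := three_halves_lt_phi
  have : φ < 7 / 4 := phi_lt_seven_fourths
  rw [h₃, h₄, fract_c_two_mul]
  refine ⟨⟨by nlinarith, by nlinarith⟩, ?_⟩
  rcases ht.lt_or_gt with hlt | hgt
  · rw [fract_c_two_mul_add_one_of_lt n hlt]
    exact ⟨by nlinarith, by nlinarith [phi_sq]⟩
  · rw [fract_c_two_mul_add_one_of_gt n hgt]
    exact ⟨by nlinarith [phi_sq], by nlinarith⟩
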